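/- Let l < 0 < u and W ∈ ℝ, and define the LiRPA propagation through one unstable ReLU: if W ≥ 0, set D = α (for any fixed α ∈ [0,1]) and b = 0; if W < 0, set D = u/(u-l) and b = -u·l/(u-l). Then for all h ∈ [l,u], W·D·h + W·b ≤ W·max(h,0). -/

import Mathlib

/-!
The ReLU `h ↦ max h 0` is convex: it lies above every line `h ↦ α * h` with slope `α ∈ [0, 1]`,
and below its chord `h ↦ u * (h - l) / (u - l)` on `[l, u]`. Multiplying by `W` preserves the
first inequality when `W ≥ 0` and reverses the second when `W < 0`.
-/

lemma mul_le_max_zero {α h : ℝ} (hα0 : 0 ≤ α) (hα1 : α ≤ 1) : α * h ≤ max h 0 := by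
  rcases le_or_gt 0 h with h0 | h0
  · exact (mul_le_of_le_one_left h0 hα1).trans (le_max_left h 0)
  · exact (mul_nonpos_of_nonneg_of_nonpos hα0 h0.le).trans (le_max_right h 0)

lemma max_zero_le_chord {l u h : ℝ} (hl : l ≤ 0) (hu : 0 ≤ u) (hlu : l < u)
    (hh : h ∈ Set.Icc l u) : max h 0 ≤ u / (u - l) * h + -(u * l) / (u - l) := by
  obtain ⟨hlh, hhu⟩ := hh
  rw [div_mul_eq_mul_div, ← add_div, le_div_iff₀ (sub_pos.mpr hlu)]
  rcases le_or_gt 0 h with h0 | h0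
  · rw [max_eq_left h0]
    nlinarith [mul_nonneg_of_nonpos_of_nonpos hl (sub_nonpos.mpr hhu)]
  · rw [max_eq_right h0.le]
    nlinarith [mul_nonneg hu (sub_nonneg.mpr hlh)]

theorem lirpa_single_relu_backward_sound (l u W α : ℝ) (hl : l < 0) (hu : 0 < u)
    (hα0 : 0 ≤ α) (hα1 : α ≤ 1) :
    ∀ h ∈ Set.Icc l u,
      W * ((if 0 ≤ W then α else u / (u - l)) * h) +
        W * (if 0 ≤ W then 0 else -(u * l) / (u - l)) ≤ W * max h 0 := by
  intro h hh
  rw [← mul_add]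
  split_ifs with hW
  · rw [add_zero]
    exact mul_le_mul_of_nonneg_left (mul_le_max_zero hα0 hα1) hW
  · exact mul_le_mul_of_nonpos_left (max_zero_le_chord hl.le hu.le (hl.trans hu) hh)
      (not_le.mp hW).le
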